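/- Let (X, μ) be a measure space, 1 ≤ p < ∞, and let f ∈ L^p(μ) with real nonnegative values. Then for every j ∈ ℕ there exists λ ∈ [2^(2^j), 2^(2^(j+1))] such that μ({x : f(x) > λ}) ≤ C · 2^(−j) · λ^(−p) · ‖f‖_{L^p}^p, where C is an absolute constant (e.g. C = 1/log 2). -/

import Mathlib

/-!
By the layer-cake formula and `p ≥ 1`, `∫ f ^ p ≥ ∫ τ ^ p μ {f > τ} dτ / τ` over `(a, b]`.
For `a = 2 ^ 2 ^ j` and `b = 2 ^ 2 ^ (j + 1)` the measure `dτ / τ` gives `(a, b]` the mass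
`log b - log a = 2 ^ j log 2`, so `τ ^ p μ {f > τ}` is at most `‖f‖_p ^ p / (2 ^ j log 2)` at some
`τ`, namely wherever it does not exceed its average.
-/

open MeasureTheory Real Set

/-- The measure `dt / t`; it vanishes on `(-∞, 0]`, where `ENNReal.ofReal t⁻¹ = 0`. -/
noncomputable def logMeasure : Measure ℝ :=
  volume.withDensity fun t => ENNReal.ofReal t⁻¹

lemma logMeasure_Ioc {a b : ℝ} (ha : 0 < a) (hab : a ≤ b) :
    logMeasure (Ioc a b) = ENNReal.ofReal (log b - log a) := by
  have hinv : IntegrableOn (fun t : ℝ => t⁻¹) (Ioc a b) := by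
    refine (intervalIntegrable_iff_integrableOn_Ioc_of_le hab).mp ?_
    exact intervalIntegral.intervalIntegrable_inv (fun t ht => by
      rw [uIcc_of_le hab] at ht; exact (ha.trans_le ht.1).ne') continuousOn_id
  rw [logMeasure, withDensity_apply _ measurableSet_Ioc,
    ← ofReal_integral_eq_lintegral_ofReal hinv
      ((ae_restrict_iff' measurableSet_Ioc).mpr (.of_forall fun t ht =>
        inv_nonneg.mpr (ha.trans ht.1).le)),
    ← intervalIntegral.integral_of_le hab, integral_inv_of_pos ha (ha.trans_le hab),
    log_div (ha.trans_le hab).ne' ha.ne']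

lemma exists_le_of_setLIntegral_le_mul {α : Type*} [MeasurableSpace α] {ν : Measure α}
    {s : Set α} {g : α → ENNReal} {c : ENNReal} (hs₀ : ν s ≠ 0) (hs : ν s ≠ ⊤)
    (hg : AEMeasurable g (ν.restrict s)) (h : ∫⁻ x in s, g x ∂ν ≤ c * ν s) :
    ∃ x ∈ s, g x ≤ c := by
  obtain ⟨x, hxs, hx⟩ := exists_le_setLAverage hs₀ hs hg
  exact ⟨x, hxs, hx.trans (by rw [setLAverage_eq]; exact ENNReal.div_le_of_le_mul h)⟩

section LevelSets

variable {X : Type*} [MeasurableSpace X] (μ : Measure X)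

lemma lintegral_meas_lt_mul_rpow_sub_one_le {p : ℝ} (hp : 1 ≤ p) {f : X → ℝ}
    (hf0 : ∀ x, 0 ≤ f x) (hfm : Measurable f) :
    ∫⁻ t in Ioi 0, μ {x | t < f x} * ENNReal.ofReal (t ^ (p - 1)) ≤
      ∫⁻ x, ENNReal.ofReal (f x ^ p) ∂μ := by
  rw [lintegral_rpow_eq_lintegral_meas_lt_mul μ (.of_forall hf0) hfm.aemeasurable
    (zero_lt_one.trans_le hp)]
  exact le_mul_of_one_le_left zero_le (ENNReal.one_le_ofReal.mpr hp)

lemma measurable_meas_lt_mul_ofReal_rpow (f : X → ℝ) (p : ℝ) :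
    Measurable fun t : ℝ => μ {x | t < f x} * ENNReal.ofReal (t ^ p) := by
  have hanti : Antitone fun t : ℝ => μ {x | t < f x} :=
    fun s t hst => measure_mono fun x hx => hst.trans_lt hx
  exact hanti.measurable.mul (measurable_id.pow_const p).ennreal_ofReal

lemma setLIntegral_logMeasure_meas_lt_mul_rpow_le {p : ℝ} (hp : 1 ≤ p) {f : X → ℝ}
    (hf0 : ∀ x, 0 ≤ f x) (hfm : Measurable f) {a b : ℝ} (ha : 0 ≤ a) :
    ∫⁻ t in Ioc a b, μ {x | t < f x} * ENNReal.ofReal (t ^ p) ∂logMeasure ≤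
      ∫⁻ x, ENNReal.ofReal (f x ^ p) ∂μ := by
  rw [logMeasure, setLIntegral_withDensity_eq_setLIntegral_mul _
    measurable_inv.ennreal_ofReal (measurable_meas_lt_mul_ofReal_rpow μ f p) measurableSet_Ioc]
  calc ∫⁻ t in Ioc a b, ENNReal.ofReal t⁻¹ * (μ {x | t < f x} * ENNReal.ofReal (t ^ p))
      = ∫⁻ t in Ioc a b, μ {x | t < f x} * ENNReal.ofReal (t ^ (p - 1)) := by
        refine setLIntegral_congr_fun measurableSet_Ioc fun t ht => ?_
        have ht0 : 0 < t := ha.trans_lt ht.1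
        rw [mul_left_comm, ← ENNReal.ofReal_mul (inv_nonneg.mpr ht0.le), rpow_sub_one ht0.ne',
          div_eq_inv_mul]
    _ ≤ ∫⁻ t in Ioi 0, μ {x | t < f x} * ENNReal.ofReal (t ^ (p - 1)) :=
        lintegral_mono_set fun t ht => ha.trans_lt ht.1
    _ ≤ ∫⁻ x, ENNReal.ofReal (f x ^ p) ∂μ := lintegral_meas_lt_mul_rpow_sub_one_le μ hp hf0 hfm

lemma exists_mem_Ioc_meas_lt_le {p : ℝ} (hp : 1 ≤ p) {f : X → ℝ} (hf0 : ∀ x, 0 ≤ f x)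
    (hfm : Measurable f) (hfp : Integrable (fun x => f x ^ p) μ) {a b : ℝ} (ha : 0 < a)
    (hab : a < b) :
    ∃ t ∈ Ioc a b, μ {x | t < f x} ≤
      ENNReal.ofReal (t ^ (-p) * (∫ x, f x ^ p ∂μ) / (log b - log a)) := by
  set I := ∫ x, f x ^ p ∂μ
  have hL : 0 < log b - log a := sub_pos.mpr (log_lt_log ha hab)
  have hI : ∫⁻ x, ENNReal.ofReal (f x ^ p) ∂μ = ENNReal.ofReal (I / (log b - log a)) *
      logMeasure (Ioc a b) := by
    rw [logMeasure_Ioc ha hab.le, ← ENNReal.ofReal_mul (div_nonneg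
      (integral_nonneg fun x => rpow_nonneg (hf0 x) p) hL.le), div_mul_cancel₀ _ hL.ne',
      ofReal_integral_eq_lintegral_ofReal hfp (.of_forall fun x => rpow_nonneg (hf0 x) p)]
  obtain ⟨t, ht, hle⟩ := exists_le_of_setLIntegral_le_mul (ν := logMeasure)
    (by simpa [logMeasure_Ioc ha hab.le] using hL) (by simp [logMeasure_Ioc ha hab.le])
    (measurable_meas_lt_mul_ofReal_rpow μ f p).aemeasurable
    ((setLIntegral_logMeasure_meas_lt_mul_rpow_le μ hp hf0 hfm ha.le).trans_eq hI)
  have htp : 0 < t ^ p := rpow_pos_of_pos (ha.trans ht.1) p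
  refine ⟨t, ht, ?_⟩
  rw [← ENNReal.le_div_iff_mul_le (.inl (by simpa using htp)) (.inl ENNReal.ofReal_ne_top),
    ← ENNReal.ofReal_div_of_pos htp] at hle
  convert hle using 2
  rw [rpow_neg (ha.trans ht.1).le]
  ring

end LevelSets

/-- Level-set selection lemma: for nonnegative `f ∈ L^p(μ)` and every `j`, there is
`λ ∈ [2^(2^j), 2^(2^(j+1))]` with `μ({f > λ}) ≤ (1/log 2) 2^{-j} λ^{-p} ‖f‖_p^p`. -/
theorem stmt_5 {X : Type*} [MeasurableSpace X] (μ : Measure X)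
    (p : ℝ) (hp : 1 ≤ p) (f : X → ℝ) (hf0 : ∀ x, 0 ≤ f x)
    (hfm : Measurable f) (hfp : Integrable (fun x => f x ^ p) μ) (j : ℕ) :
    ∃ lam ∈ Set.Icc ((2 : ℝ) ^ (2 ^ j)) ((2 : ℝ) ^ (2 ^ (j + 1))),
      μ {x | lam < f x} ≤
        ENNReal.ofReal ((1 / Real.log 2) * (2 : ℝ) ^ (-(j : ℝ)) * lam ^ (-p) *
          ∫ x, f x ^ p ∂μ) := by
  obtain ⟨t, ht, hle⟩ := exists_mem_Ioc_meas_lt_le μ hp hf0 hfm hfp (by positivity)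
    (pow_lt_pow_right₀ one_lt_two (Nat.pow_lt_pow_right one_lt_two j.lt_succ_self))
  refine ⟨t, Ioc_subset_Icc_self ht, hle.trans_eq (congrArg _ ?_)⟩
  have hlog : log (2 ^ 2 ^ (j + 1)) - log (2 ^ 2 ^ j) = 2 ^ j * log 2 := by
    simp only [log_pow]; push_cast; ring
  rw [hlog, rpow_neg zero_le_two, rpow_natCast]
  field_simp
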